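/- arXiv:2508.18065 — 3 statements merged into one kernel-verified Lean document; each statement's English description precedes it below -/
import Mathlib

section
/- Let ω* : ℝ → ℝ² be continuously differentiable and 2π-periodic, and suppose: (i) there is α > 0 with ‖(−sin z, cos z) + (ω*)'(z)‖ ≥ α for all z ∈ ℝ; (ii) the interface map Φ^{ω*} is injective modulo 2π, i.e. Φ^{ω*}(z₁) = Φ^{ω*}(z₂) implies z₁ − z₂ ∈ 2πℤ; (iii) ‖Φ^{ω*}(z)‖ ≠ 2 for all z ∈ ℝ. Then there exists δ > 0 such that every continuously differentiable 2π-periodic map ω : ℝ → ℝ² with sup_z ‖ω(z) − ω*(z)‖ + sup_z ‖ω'(z) − (ω*)'(z)‖ ≤ δ satisfies: Φ^{ω} is injective modulo 2π, ‖Φ^{ω}(z)‖ ≠ 2 for all z ∈ ℝ, and ‖(−sin z, cos z) + ω'(z)‖ ≥ α/2 for all z ∈ ℝ. -/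
open Real

/-- The point `(a, b)` of the Euclidean plane `ℝ²`. -/
noncomputable def vec2 (a b : ℝ) : EuclideanSpace ℝ (Fin 2) :=
  (EuclideanSpace.equiv (Fin 2) ℝ).symm ![a, b]

/-- The interface map associated to a displacement `ω` of the unit circle:
`Φ^{ω}(z) = (cos z, sin z) + ω(z)`. -/
noncomputable def interfaceMap (ω : ℝ → EuclideanSpace ℝ (Fin 2)) (z : ℝ) :
    EuclideanSpace ℝ (Fin 2) :=
  vec2 (Real.cos z) (Real.sin z) + ω z

/-!
Near the diagonal, `|z₁ - z₂| ≤ r`, injectivity comes from the mean value inequality: by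
uniform continuity of the derivative of the periodic curve `f`, the derivative of a `C¹`-close
curve `g` stays within `α / 2` of the fixed vector `f' z₂`, of norm at least `α`, so `g` moves
by at least `α |z₁ - z₂| / 2`. Away from the diagonal, compactness of a fundamental domain gives
`ε ≤ ‖f (x + s) - f x‖` for `s ∈ [r, 2π - r]`, which survives perturbations smaller than
`ε / 2`. Avoidance of `∂Ω̂` and the lower bound on the tangent are stable for the same reasons.
-/

open Function Set

def InjectiveModulo {β : Type*} (f : ℝ → β) (c : ℝ) : Prop :=
  ∀ z₁ z₂, f z₁ = f z₂ → ∃ k : ℤ, z₁ - z₂ = c * k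

theorem IsCompact.exists_pos_forall_le {X : Type*} [TopologicalSpace X] {K : Set X} {h : X → ℝ}
    (hK : IsCompact K) (hh : ContinuousOn h K) (hpos : ∀ x ∈ K, 0 < h x) :
    ∃ ε > 0, ∀ x ∈ K, ε ≤ h x := by
  rcases K.eq_empty_or_nonempty with rfl | hne
  · exact ⟨1, one_pos, by simp⟩
  · obtain ⟨x₀, hx₀, hmin⟩ := hK.exists_isMinOn hne hh
    exact ⟨h x₀, hpos x₀ hx₀, fun x hx => hmin hx⟩

namespace Function.Periodic

variable {c : ℝ}

theorem exists_pos_forall_le {h : ℝ → ℝ} (hp : Periodic h c) (hc : 0 < c) (hh : Continuous h)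
    (hpos : ∀ x, 0 < h x) : ∃ ε > 0, ∀ x, ε ≤ h x := by
  obtain ⟨ε, hε, hle⟩ :=
    (isCompact_Icc (a := 0) (b := c)).exists_pos_forall_le hh.continuousOn fun x _ => hpos x
  refine ⟨ε, hε, fun x => ?_⟩
  obtain ⟨y, hy, hxy⟩ := hp.exists_mem_Ico₀ hc x
  exact hxy ▸ hle y (Ico_subset_Icc_self hy)

theorem uniformContinuous_of_continuous {X : Type*} [UniformSpace X] {f : ℝ → X}
    (hp : Periodic f c) (hc : 0 < c) (hf : Continuous f) : UniformContinuous f := by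
  have := Fact.mk hc
  have hF : Continuous (hp.lift : AddCircle c → X) := continuous_quot_lift _ hf
  exact (CompactSpace.uniformContinuous_of_continuous hF).comp
    (uniformContinuous_addMonoidHom_of_continuous (f := QuotientAddGroup.mk' _)
      continuous_quotient_mk')

protected theorem deriv {E : Type*} [NormedAddCommGroup E] [NormedSpace ℝ E] {f : ℝ → E}
    (hp : Periodic f c) : Periodic (deriv f) c := fun z => by
  rw [← deriv_comp_add_const, show (fun x => f (x + c)) = f from funext hp]

theorem injectiveModulo_of_separated {β : Type*} {g : ℝ → β} {r : ℝ} (hp : Periodic g c)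
    (hc : 0 < c) (hloc : ∀ a b, |a - b| ≤ r → g a = g b → a = b)
    (hsep : ∀ x, ∀ s ∈ Ioo r (c - r), g (x + s) ≠ g x) : InjectiveModulo g c := by
  intro z₁ z₂ h
  set s := toIcoMod hc 0 (z₁ - z₂)
  set k := toIcoDiv hc 0 (z₁ - z₂)
  have hs : s ∈ Ico 0 c := by simpa using toIcoMod_mem_Ico hc 0 (z₁ - z₂)
  have hz : z₁ = z₂ + s + k * c := by
    have := toIcoMod_add_toIcoDiv_zsmul hc 0 (z₁ - z₂)
    rw [zsmul_eq_mul] at this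
    linear_combination -this
  have hgs : g (z₂ + s) = g z₂ := by rw [← h, hz, hp.int_mul k]
  rcases le_or_gt s r with hsr | hrs
  · have := hloc _ _ (by simpa [abs_of_nonneg hs.1] using hsr) hgs
    exact ⟨k, by linear_combination hz + this⟩
  rcases le_or_gt (c - r) s with hsr' | hsr'
  · have := hloc (z₂ + s) (z₂ + c) (by rw [abs_le]; constructor <;> linarith [hs.2])
      (hgs.trans (hp z₂).symm)
    exact ⟨k + 1, by push_cast; linear_combination hz + this⟩
  · exact absurd hgs (hsep z₂ s ⟨hrs, hsr'⟩)

end Function.Periodic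

theorem not_exists_int_mul_of_mem_Icc {c r s : ℝ} (hr : 0 < r) (hs : s ∈ Icc r (c - r)) :
    ¬∃ k : ℤ, s = c * k := by
  rintro ⟨k, rfl⟩
  have hc : 0 < c := by linarith [hs.1, hs.2]
  rcases le_or_gt k 0 with hk | hk
  · nlinarith [hs.1, (Int.cast_nonpos (R := ℝ)).2 hk]
  · have hk1 : (1 : ℝ) ≤ k := by exact_mod_cast hk
    nlinarith [hs.2]

theorem InjectiveModulo.exists_pos_le_norm_sub {E : Type*} [NormedAddCommGroup E] {f : ℝ → E}
    {c r : ℝ} (hf : InjectiveModulo f c) (hp : Periodic f c) (hc : 0 < c) (hcont : Continuous f)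
    (hr : 0 < r) :
    ∃ ε > 0, ∀ x, ∀ s ∈ Icc r (c - r), ε ≤ ‖f (x + s) - f x‖ := by
  obtain ⟨ε, hε, hle⟩ :=
    (isCompact_Icc (a := 0) (b := c)).prod (isCompact_Icc (a := r) (b := c - r))
      |>.exists_pos_forall_le (h := fun p => ‖f (p.1 + p.2) - f p.1‖) (by fun_prop)
      fun p hp => norm_pos_iff.2 fun h0 =>
        not_exists_int_mul_of_mem_Icc hr hp.2 (by simpa using hf _ _ (sub_eq_zero.1 h0))
  refine ⟨ε, hε, fun x s hs => ?_⟩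
  have hps : Periodic (fun x => ‖f (x + s) - f x‖) c := ((hp.add_const s).sub hp).comp norm
  obtain ⟨y, hy, hxy⟩ := hps.exists_mem_Ico₀ hc x
  exact hxy ▸ hle (y, s) ⟨Ico_subset_Icc_self hy, hs⟩

section

variable {E : Type*} [NormedAddCommGroup E] [NormedSpace ℝ E]

theorem mul_abs_sub_le_norm_sub {g G : ℝ → E} {w : E} {C a b : ℝ}
    (hg : ∀ z ∈ uIcc a b, HasDerivAt g (G z) z) (hG : ∀ z ∈ uIcc a b, ‖G z - w‖ ≤ C) :
    (‖w‖ - C) * |a - b| ≤ ‖g a - g b‖ := by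
  have hmvt : ‖(g a - a • w) - (g b - b • w)‖ ≤ C * ‖a - b‖ :=
    (convex_uIcc a b).norm_image_sub_le_of_norm_hasDerivWithin_le
      (f := fun z => g z - z • w)
      (fun z hz => by
        simpa using ((hg z hz).fun_sub ((hasDerivAt_id z).smul_const w)).hasDerivWithinAt)
      hG right_mem_uIcc left_mem_uIcc
  calc (‖w‖ - C) * |a - b| = ‖(a - b) • w‖ - C * ‖a - b‖ := by
        rw [norm_smul, Real.norm_eq_abs]; ring
    _ ≤ ‖g a - g b‖ := by
        have : (a - b) • w = (g a - g b) - ((g a - a • w) - (g b - b • w)) := by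
          rw [sub_smul]; abel
        rw [this]
        linarith [norm_sub_le (g a - g b) ((g a - a • w) - (g b - b • w))]

theorem Function.Periodic.exists_pos_forall_injectiveModulo_of_norm_sub_le {f : ℝ → E} {c : ℝ}
    (hp : Periodic f c) (hc : 0 < c) (hf : ContDiff ℝ 1 f) (hf' : ∀ z, deriv f z ≠ 0)
    (hinj : InjectiveModulo f c) :
    ∃ δ > 0, ∀ g : ℝ → E, Differentiable ℝ g → Periodic g c →
      (∀ z, ‖g z - f z‖ ≤ δ) → (∀ z, ‖deriv g z - deriv f z‖ ≤ δ) → InjectiveModulo g c := by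
  have hf'c : Continuous (deriv f) := hf.continuous_deriv le_rfl
  obtain ⟨α, hα, hαle⟩ := (hp.deriv.comp norm).exists_pos_forall_le hc hf'c.norm
    fun z => norm_pos_iff.2 (hf' z)
  obtain ⟨r, hr, hruc⟩ := Metric.uniformContinuous_iff.1
    (hp.deriv.uniformContinuous_of_continuous hc hf'c) (α / 4) (by positivity)
  obtain ⟨ε, hε, hεle⟩ := hinj.exists_pos_le_norm_sub hp hc hf.continuous (half_pos hr)
  refine ⟨min (α / 4) (ε / 3), by positivity, fun g hg hgp h0 h1 =>
    hgp.injectiveModulo_of_separated hc (r := r / 2) ?_ ?_⟩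
  · intro a b hab hgab
    have hG : ∀ z ∈ uIcc a b, ‖deriv g z - deriv f b‖ ≤ α / 2 := fun z hz => by
      have hzb : dist z b < r := by
        rw [Real.dist_eq]; linarith [abs_sub_left_of_mem_uIcc (uIcc_comm a b ▸ hz)]
      calc ‖deriv g z - deriv f b‖
          ≤ ‖deriv g z - deriv f z‖ + ‖deriv f z - deriv f b‖ :=
            norm_sub_le_norm_sub_add_norm_sub _ _ _
        _ ≤ α / 2 := by
            linarith [h1 z, min_le_left (α / 4) (ε / 3), (hruc hzb).le,
              dist_eq_norm (deriv f z) (deriv f b)]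
    have hlow := mul_abs_sub_le_norm_sub (fun z _ => (hg z).hasDerivAt) hG
    rw [hgab, sub_self, norm_zero] at hlow
    have hαb : α ≤ ‖deriv f b‖ := hαle b
    have : |a - b| = 0 := by nlinarith [abs_nonneg (a - b)]
    exact sub_eq_zero.1 (abs_eq_zero.1 this)
  · intro x s hs hgs
    have hfs : f (x + s) - f x = (g x - f x) - (g (x + s) - f (x + s)) := by rw [hgs]; abel
    have := hεle x s (Ioo_subset_Icc_self hs)
    rw [hfs] at this
    linarith [norm_sub_le (g x - f x) (g (x + s) - f (x + s)), h0 x, h0 (x + s),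
      min_le_right (α / 4) (ε / 3)]

end

theorem hasDerivAt_vec2_cos_sin (z : ℝ) :
    HasDerivAt (fun z => vec2 (cos z) (sin z)) (vec2 (-sin z) (cos z)) z := by
  have h : HasDerivAt (fun z => ![cos z, sin z]) ![-sin z, cos z] z := by
    rw [hasDerivAt_pi]
    intro i
    fin_cases i
    · simpa using hasDerivAt_cos z
    · simpa using hasDerivAt_sin z
  exact (EuclideanSpace.equiv (Fin 2) ℝ).symm.toContinuousLinearMap.hasFDerivAt.comp_hasDerivAt
    z h

theorem contDiff_vec2_cos_sin : ContDiff ℝ 1 fun z => vec2 (cos z) (sin z) :=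
  (EuclideanSpace.equiv (Fin 2) ℝ).symm.contDiff.comp <| contDiff_pi.2 fun i => by
    fin_cases i
    · simpa using contDiff_cos
    · simpa using contDiff_sin

section

variable {ω : ℝ → EuclideanSpace ℝ (Fin 2)}

theorem contDiff_interfaceMap (hω : ContDiff ℝ 1 ω) : ContDiff ℝ 1 (interfaceMap ω) :=
  contDiff_vec2_cos_sin.add hω

theorem deriv_interfaceMap (hω : Differentiable ℝ ω) (z : ℝ) :
    deriv (interfaceMap ω) z = vec2 (-sin z) (cos z) + deriv ω z :=
  ((hasDerivAt_vec2_cos_sin z).add (hω z).hasDerivAt).deriv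

theorem periodic_interfaceMap (hω : Periodic ω (2 * π)) :
    Periodic (interfaceMap ω) (2 * π) := fun z => by
  rw [interfaceMap, interfaceMap, cos_add_two_pi, sin_add_two_pi, hω z]

theorem interfaceMap_sub_interfaceMap (ω' : ℝ → EuclideanSpace ℝ (Fin 2)) (z : ℝ) :
    interfaceMap ω z - interfaceMap ω' z = ω z - ω' z :=
  add_sub_add_left_eq_sub _ _ _

end

/-- Stability of injectivity and non-degeneracy of the interface under small `C¹`
perturbations of the displacement. -/
theorem interface_injectivity_stability
    (ωstar : ℝ → EuclideanSpace ℝ (Fin 2))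
    (hC1 : ContDiff ℝ 1 ωstar)
    (hper : Function.Periodic ωstar (2 * π))
    (α : ℝ) (hα : 0 < α)
    (hnd : ∀ z : ℝ, α ≤ ‖vec2 (-Real.sin z) (Real.cos z) + deriv ωstar z‖)
    (hinj : ∀ z₁ z₂ : ℝ, interfaceMap ωstar z₁ = interfaceMap ωstar z₂ →
      ∃ k : ℤ, z₁ - z₂ = 2 * π * k)
    (hbd : ∀ z : ℝ, ‖interfaceMap ωstar z‖ ≠ 2) :
    ∃ δ > 0, ∀ ω : ℝ → EuclideanSpace ℝ (Fin 2),
      ContDiff ℝ 1 ω →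
      Function.Periodic ω (2 * π) →
      (∀ z : ℝ, ‖ω z - ωstar z‖ + ‖deriv ω z - deriv ωstar z‖ ≤ δ) →
      (∀ z₁ z₂ : ℝ, interfaceMap ω z₁ = interfaceMap ω z₂ →
        ∃ k : ℤ, z₁ - z₂ = 2 * π * k) ∧
      (∀ z : ℝ, ‖interfaceMap ω z‖ ≠ 2) ∧
      (∀ z : ℝ, α / 2 ≤ ‖vec2 (-Real.sin z) (Real.cos z) + deriv ω z‖) := by
  have hstar := hC1.differentiable one_ne_zero
  have hΦ := periodic_interfaceMap hper
  obtain ⟨δ₀, hδ₀, hstable⟩ := hΦ.exists_pos_forall_injectiveModulo_of_norm_sub_le two_pi_pos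
    (contDiff_interfaceMap hC1)
    (fun z => deriv_interfaceMap hstar z ▸ norm_pos_iff.1 (hα.trans_le (hnd z))) hinj
  obtain ⟨m, hm, hmle⟩ : ∃ m > 0, ∀ z, m ≤ |‖interfaceMap ωstar z‖ - 2| :=
    (hΦ.comp fun x => |‖x‖ - 2|).exists_pos_forall_le two_pi_pos
      ((contDiff_interfaceMap hC1).continuous.norm.sub continuous_const).abs
      fun z => abs_pos.2 (sub_ne_zero.2 (hbd z))
  refine ⟨min δ₀ (min (m / 2) (α / 2)), by positivity, fun ω hω hωper hclose => ?_⟩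
  set δ := min δ₀ (min (m / 2) (α / 2))
  obtain ⟨hδδ₀, hδm, hδα⟩ : δ ≤ δ₀ ∧ δ ≤ m / 2 ∧ δ ≤ α / 2 := by simp [δ]
  have hω' := hω.differentiable one_ne_zero
  have h0 z : ‖interfaceMap ω z - interfaceMap ωstar z‖ ≤ δ := by
    rw [interfaceMap_sub_interfaceMap]
    linarith [hclose z, norm_nonneg (deriv ω z - deriv ωstar z)]
  have h1 z : ‖deriv (interfaceMap ω) z - deriv (interfaceMap ωstar) z‖ ≤ δ := by
    rw [deriv_interfaceMap hω', deriv_interfaceMap hstar, add_sub_add_left_eq_sub]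
    linarith [hclose z, norm_nonneg (ω z - ωstar z)]
  refine ⟨hstable _ ((contDiff_interfaceMap hω).differentiable one_ne_zero)
    (periodic_interfaceMap hωper) (fun z => (h0 z).trans hδδ₀) (fun z => (h1 z).trans hδδ₀),
    fun z hz => ?_, fun z => ?_⟩
  · have := abs_norm_sub_norm_le (interfaceMap ω z) (interfaceMap ωstar z)
    rw [hz, abs_sub_comm] at this
    linarith [hmle z, h0 z]
  · have h1z := h1 z
    rw [deriv_interfaceMap hω', deriv_interfaceMap hstar, norm_sub_rev] at h1z
    linarith [hnd z, norm_le_norm_add_norm_sub' (vec2 (-sin z) (cos z) + deriv ωstar z)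
      (vec2 (-sin z) (cos z) + deriv ω z)]
end

section
/- Let A = {x ∈ ℝ² : 1 < ‖x‖ < 2} be the open annulus, and let u : ℝ² → ℝ be continuously differentiable on an open set containing the closure of A with u(x) = 0 whenever ‖x‖ = 2. Then for every ε ∈ (0, 1], ∫_{{x : 1 < ‖x‖ < 1 + ε}} |u(x)| dx ≤ 2√(2π) · ε · (∫_A ‖∇u(x)‖² dx)^{1/2}. -/
/-!
On the ray through a unit vector `ω`, the fundamental theorem of calculus from the outer circle,
where `u` vanishes, gives `|u (r • ω)| ≤ ∫₁² ‖∇u (t • ω)‖ dt` for `1 ≤ r ≤ 2`. In polar coordinates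
the thin layer then contributes at most `(∫₁^{1+ε} r dr) · ∫∫ ‖∇u (t • ω)‖ dt dθ`, with
`∫₁^{1+ε} r dr ≤ 2ε`. Cauchy–Schwarz on the box `(1, 2) × (-π, π)` of area `2π`, together with
`t ≥ 1` for the Jacobian `t`, bounds the double integral by `√(2π) ‖∇u‖_{L²(A)}`.
-/

open Real MeasureTheory Set

theorem abs_le_integral_abs_deriv_of_eq_zero {g g' : ℝ → ℝ} {a b r : ℝ}
    (hg : ∀ t ∈ Icc a b, HasDerivAt g (g' t) t) (hg' : IntervalIntegrable g' volume a b)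
    (hgb : g b = 0) (hr : r ∈ Icc a b) : |g r| ≤ ∫ t in a..b, |g' t| := by
  have hrb : Icc r b ⊆ Icc a b := Icc_subset_Icc_left hr.1
  have hftc : ∫ t in r..b, g' t = g b - g r := by
    refine intervalIntegral.integral_eq_sub_of_hasDerivAt (fun t ht => hg t ?_) ?_
    · exact hrb (uIcc_of_le hr.2 ▸ ht)
    · exact hg'.mono_set (by rwa [uIcc_of_le hr.2, uIcc_of_le (hr.1.trans hr.2)])
  calc |g r| = |∫ t in r..b, g' t| := by rw [hftc, hgb, zero_sub, abs_neg]
    _ ≤ ∫ t in r..b, |g' t| := intervalIntegral.abs_integral_le_integral_abs hr.2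
    _ ≤ ∫ t in a..b, |g' t| := intervalIntegral.integral_mono_interval hr.1 hr.2 le_rfl
        (ae_of_all _ fun t => abs_nonneg _) hg'.abs

theorem abs_le_norm_mul_integral_norm_fderiv_smul {E : Type*} [NormedAddCommGroup E]
    [NormedSpace ℝ E] {v : E → ℝ} {U : Set E} (hU : IsOpen U) (hv : ContDiffOn ℝ 1 v U) {w : E}
    {a b r : ℝ} (hseg : ∀ t ∈ Icc a b, t • w ∈ U) (hvb : v (b • w) = 0) (hr : r ∈ Icc a b) :
    |v (r • w)| ≤ ‖w‖ * ∫ t in a..b, ‖fderiv ℝ v (t • w)‖ := by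
  have hab : a ≤ b := hr.1.trans hr.2
  have hcont : ContinuousOn (fun t : ℝ => fderiv ℝ v (t • w)) (Icc a b) :=
    (hv.continuousOn_fderiv_of_isOpen hU le_rfl).comp (by fun_prop) hseg
  have hderiv : ∀ t ∈ Icc a b,
      HasDerivAt (fun s : ℝ => v (s • w)) (fderiv ℝ v (t • w) w) t := fun t ht => by
    have hvt := (hv.differentiableOn one_ne_zero).differentiableAt (hU.mem_nhds (hseg t ht))
    exact hvt.hasFDerivAt.comp_hasDerivAt t (by simpa using (hasDerivAt_id t).smul_const w)
  calc |v (r • w)| ≤ ∫ t in a..b, |fderiv ℝ v (t • w) w| :=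
        abs_le_integral_abs_deriv_of_eq_zero hderiv
          ((hcont.clm_apply continuousOn_const).intervalIntegrable_of_Icc hab) hvb hr
    _ ≤ ∫ t in a..b, ‖fderiv ℝ v (t • w)‖ * ‖w‖ :=
        intervalIntegral.integral_mono_on hab
          ((hcont.clm_apply continuousOn_const).abs.intervalIntegrable_of_Icc hab)
          ((hcont.norm.mul continuousOn_const).intervalIntegrable_of_Icc hab)
          fun t _ => (fderiv ℝ v (t • w)).le_opNorm w
    _ = ‖w‖ * ∫ t in a..b, ‖fderiv ℝ v (t • w)‖ := by
        rw [intervalIntegral.integral_mul_const, mul_comm]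

theorem norm_gradient_eq_norm_fderiv {F : Type*} [NormedAddCommGroup F] [InnerProductSpace ℝ F]
    [CompleteSpace F] (f : F → ℝ) (x : F) : ‖gradient f x‖ = ‖fderiv ℝ f x‖ :=
  (InnerProductSpace.toDual ℝ F).symm.norm_map _

section Integral

variable {α : Type*} [MeasurableSpace α]

theorem integral_prod_le_of_le_mul_integral {β : Type*} [MeasurableSpace β]
    {μ μ' : Measure α} {ν : Measure β} [SFinite μ] [SFinite μ'] [SFinite ν]
    {f F : α × β → ℝ} {w : α → ℝ}
    (hf : 0 ≤ᵐ[μ.prod ν] f) (hw : Integrable w μ) (hF : Integrable F (μ'.prod ν))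
    (hfF : ∀ᵐ p ∂μ.prod ν, f p ≤ w p.1 * ∫ t, F (t, p.2) ∂μ') :
    ∫ p, f p ∂μ.prod ν ≤ (∫ r, w r ∂μ) * ∫ p, F p ∂μ'.prod ν := by
  calc ∫ p, f p ∂μ.prod ν ≤ ∫ p, w p.1 * ∫ t, F (t, p.2) ∂μ' ∂μ.prod ν :=
        integral_mono_of_nonneg hf (hw.mul_prod hF.integral_prod_right) hfF
    _ = _ := by rw [integral_prod_mul w (fun θ => ∫ t, F (t, θ) ∂μ'), integral_prod_symm F hF]

theorem integral_le_sqrt_measureReal_univ_mul_sqrt_integral_sq {μ : Measure α}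
    [IsFiniteMeasure μ] {f : α → ℝ} (hf : MemLp f 2 μ) :
    ∫ a, f a ∂μ ≤ √(μ.real univ) * √(∫ a, f a ^ 2 ∂μ) := by
  have h := integral_mul_norm_le_Lp_mul_Lq (f := f) (g := fun _ => (1 : ℝ))
    Real.HolderConjugate.two_two (by simpa using hf) (by simpa using memLp_const (1 : ℝ))
  simp only [norm_one, mul_one, one_pow, integral_const, smul_eq_mul, Real.norm_eq_abs,
    rpow_two, sq_abs, ← sqrt_eq_rpow] at h
  calc ∫ a, f a ∂μ ≤ ∫ a, |f a| ∂μ := (le_abs_self _).trans abs_integral_le_integral_abs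
    _ ≤ _ := by rw [mul_comm]; exact h

end Integral

def annulus (E : Type*) [Norm E] (a b : ℝ) : Set E := {x | a < ‖x‖ ∧ ‖x‖ < b}

section Annulus

variable {E : Type*} {a b : ℝ}

theorem isOpen_annulus [SeminormedAddCommGroup E] : IsOpen (annulus E a b) :=
  (isOpen_lt continuous_const continuous_norm).inter (isOpen_lt continuous_norm continuous_const)

theorem mem_closure_annulus [NormedAddCommGroup E] [NormedSpace ℝ E] (ha : 0 < a) (hab : a < b)
    {x : E} (hx : ‖x‖ ∈ Icc a b) : x ∈ closure (annulus E a b) := by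
  have hx0 : 0 < ‖x‖ := ha.trans_le hx.1
  have h1 : (1 : ℝ) ∈ closure (Ioo (a / ‖x‖) (b / ‖x‖)) := by
    rw [closure_Ioo (div_lt_div_of_pos_right hab hx0).ne]
    exact ⟨(div_le_one hx0).2 hx.1, (one_le_div hx0).2 hx.2⟩
  have hmaps : MapsTo (fun t : ℝ => t • x) (Ioo (a / ‖x‖) (b / ‖x‖)) (annulus E a b) := by
    intro t ht
    have ht0 : 0 < t := (div_pos ha hx0).trans ht.1
    simp only [annulus, mem_ofPred_eq, norm_smul, norm_of_nonneg ht0.le]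
    exact ⟨(div_lt_iff₀ hx0).1 ht.1, (lt_div_iff₀ hx0).1 ht.2⟩
  simpa using map_mem_closure (by fun_prop) h1 hmaps

theorem LinearIsometryEquiv.preimage_annulus {F : Type*} [SeminormedAddCommGroup E]
    [SeminormedAddCommGroup F] [NormedSpace ℝ E] [NormedSpace ℝ F] (L : E ≃ₗᵢ[ℝ] F) :
    L ⁻¹' annulus F a b = annulus E a b := by
  ext x
  simp [annulus]

end Annulus

noncomputable def euclideanPolarCoordSymm (p : ℝ × ℝ) : EuclideanSpace ℝ (Fin 2) :=
  Complex.orthonormalBasisOneI.repr (Complex.polarCoord.symm p)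

theorem continuous_euclideanPolarCoordSymm : Continuous euclideanPolarCoordSymm := by
  unfold euclideanPolarCoordSymm
  simp only [Complex.polarCoord_symm_apply]
  fun_prop

theorem norm_euclideanPolarCoordSymm (p : ℝ × ℝ) : ‖euclideanPolarCoordSymm p‖ = |p.1| := by
  rw [euclideanPolarCoordSymm, LinearIsometryEquiv.norm_map, Complex.norm_polarCoord_symm]

theorem euclideanPolarCoordSymm_mk (r θ : ℝ) :
    euclideanPolarCoordSymm (r, θ) = r • euclideanPolarCoordSymm (1, θ) := by
  rw [euclideanPolarCoordSymm, euclideanPolarCoordSymm, ← LinearIsometryEquiv.map_smul]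
  simp only [Complex.polarCoord_symm_apply, Complex.real_smul, Complex.ofReal_one, one_mul]

theorem setIntegral_annulus_eq_setIntegral_polarCoord (h : EuclideanSpace ℝ (Fin 2) → ℝ)
    {a b : ℝ} (ha : 0 ≤ a) :
    ∫ x in annulus _ a b, h x =
      ∫ p in Ioo a b ×ˢ Ioo (-π) π, p.1 * h (euclideanPolarCoordSymm p) := by
  set B := Complex.orthonormalBasisOneI
  have hbox : polarCoord.target ∩ Ioo a b ×ˢ univ = Ioo a b ×ˢ Ioo (-π) π := by
    ext ⟨r, θ⟩
    simp only [polarCoord_target, mem_inter_iff, mem_prod, mem_Ioi, mem_Ioo, mem_univ]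
    constructor
    · rintro ⟨⟨-, hθ⟩, hr, -⟩; exact ⟨hr, hθ⟩
    · rintro ⟨hr, hθ⟩; exact ⟨⟨ha.trans_lt hr.1, hθ⟩, hr, trivial⟩
  have hind : ∀ p ∈ polarCoord.target,
      p.1 • (annulus ℂ a b).indicator (fun z => h (B.repr z)) (Complex.polarCoord.symm p) =
        (Ioo a b ×ˢ univ).indicator (fun p => p.1 * h (euclideanPolarCoordSymm p)) p := by
    rintro ⟨r, θ⟩ ⟨hr : 0 < r, -⟩
    have hmem : Complex.polarCoord.symm (r, θ) ∈ annulus ℂ a b ↔ r ∈ Ioo a b := by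
      simp only [annulus, mem_ofPred_eq, Complex.norm_polarCoord_symm, abs_of_pos hr, mem_Ioo]
    by_cases hrab : r ∈ Ioo a b
    · rw [indicator_of_mem (hmem.2 hrab), indicator_of_mem (mk_mem_prod hrab (mem_univ θ))]
      rfl
    · rw [indicator_of_notMem (mt hmem.1 hrab), indicator_of_notMem (fun h => hrab h.1),
        smul_zero]
  rw [← B.measurePreserving_repr.setIntegral_preimage_emb B.repr.toHomeomorph.measurableEmbedding,
    B.repr.preimage_annulus, ← integral_indicator isOpen_annulus.measurableSet,
    ← Complex.integral_comp_polarCoord_symm,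
    setIntegral_congr_fun polarCoord.open_target.measurableSet hind,
    setIntegral_indicator (measurableSet_Ioo.prod MeasurableSet.univ), hbox]

section PolarBox

variable {F : ℝ × ℝ → ℝ}

theorem setIntegral_polarBox_le_sqrt (hF : ContinuousOn F (Icc 1 2 ×ˢ Icc (-π) π)) :
    ∫ p in Ioo 1 2 ×ˢ Ioo (-π) π, F p ≤
      √(2 * π) * √(∫ p in Ioo 1 2 ×ˢ Ioo (-π) π, p.1 * F p ^ 2) := by
  set box := Ioo (1 : ℝ) 2 ×ˢ Ioo (-π) π
  have hbox : MeasurableSet box := measurableSet_Ioo.prod measurableSet_Ioo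
  have hcompact : IsCompact (Icc (1 : ℝ) 2 ×ˢ Icc (-π) π) := isCompact_Icc.prod isCompact_Icc
  have hbox_sub : box ⊆ Icc 1 2 ×ˢ Icc (-π) π := prod_mono Ioo_subset_Icc_self Ioo_subset_Icc_self
  have : IsFiniteMeasure (volume.restrict box) := isFiniteMeasure_restrict.2
    ((measure_mono hbox_sub).trans_lt hcompact.measure_lt_top).ne
  have hvol : volume.real box = 2 * π := by
    simp only [box, Measure.volume_eq_prod, measureReal_prod_prod, volume_real_Ioo]
    rw [max_eq_left (by norm_num), max_eq_left (by linarith [pi_pos])]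
    ring
  have hF_memLp : MemLp F 2 (volume.restrict box) :=
    (memLp_two_iff_integrable_sq ((hF.mono hbox_sub).aestronglyMeasurable hbox)).2
      (((hF.pow 2).integrableOn_compact hcompact).mono_set hbox_sub)
  have hF_sq_le : ∫ p in box, F p ^ 2 ≤ ∫ p in box, p.1 * F p ^ 2 :=
    integral_mono_of_nonneg (ae_of_all _ fun p => sq_nonneg _)
      (((continuousOn_fst.mul (hF.pow 2)).integrableOn_compact hcompact).mono_set hbox_sub)
      (ae_restrict_of_forall_mem hbox fun p hp => le_mul_of_one_le_left (sq_nonneg _) hp.1.1.le)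
  calc ∫ p in box, F p ≤ √(2 * π) * √(∫ p in box, F p ^ 2) := by
        simpa [hvol] using integral_le_sqrt_measureReal_univ_mul_sqrt_integral_sq hF_memLp
    _ ≤ _ := by gcongr

theorem setIntegral_mul_abs_le_of_le_setIntegral_polarBox {g : ℝ × ℝ → ℝ} {ε : ℝ}
    (hF : ContinuousOn F (Icc 1 2 ×ˢ Icc (-π) π)) (hε0 : 0 < ε) (hε1 : ε ≤ 1)
    (hg : ∀ p ∈ Ioo 1 (1 + ε) ×ˢ Ioo (-π) π, |g p| ≤ ∫ t in Ioo 1 2, F (t, p.2)) :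
    ∫ p in Ioo 1 (1 + ε) ×ˢ Ioo (-π) π, p.1 * |g p| ≤
      2 * √(2 * π) * ε * √(∫ p in Ioo 1 2 ×ˢ Ioo (-π) π, p.1 * F p ^ 2) := by
  have hrestrict_prod (s t : Set ℝ) :
      volume.restrict (s ×ˢ t) = (volume.restrict s).prod (volume.restrict t) := by
    rw [Measure.volume_eq_prod, Measure.prod_restrict]
  have hthin : MeasurableSet (Ioo 1 (1 + ε) ×ˢ Ioo (-π) π) :=
    measurableSet_Ioo.prod measurableSet_Ioo
  have hF_int : IntegrableOn F (Ioo 1 2 ×ˢ Ioo (-π) π) :=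
    (hF.integrableOn_compact (isCompact_Icc.prod isCompact_Icc)).mono_set
      (prod_mono Ioo_subset_Icc_self Ioo_subset_Icc_self)
  have hweight : ∫ r in Ioo 1 (1 + ε), r ≤ 2 * ε := by
    rw [← integral_Ioc_eq_integral_Ioo, ← intervalIntegral.integral_of_le (by linarith),
      integral_id]
    nlinarith
  have hfubini : ∫ p in Ioo 1 (1 + ε) ×ˢ Ioo (-π) π, p.1 * |g p| ≤
      (∫ r in Ioo 1 (1 + ε), r) * ∫ p in Ioo 1 2 ×ˢ Ioo (-π) π, F p := by
    rw [hrestrict_prod, hrestrict_prod]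
    refine integral_prod_le_of_le_mul_integral ?_
      ((continuous_id.integrableOn_Icc).mono_set Ioo_subset_Icc_self)
      (hrestrict_prod _ _ ▸ hF_int) ?_ <;> rw [← hrestrict_prod]
    · exact ae_restrict_of_forall_mem hthin fun p hp =>
        mul_nonneg (by linarith [hp.1.1]) (abs_nonneg _)
    · exact ae_restrict_of_forall_mem hthin fun p hp =>
        mul_le_mul_of_nonneg_left (hg p hp) (by linarith [hp.1.1])
  calc ∫ p in Ioo 1 (1 + ε) ×ˢ Ioo (-π) π, p.1 * |g p|
      ≤ (∫ r in Ioo 1 (1 + ε), r) * ∫ p in Ioo 1 2 ×ˢ Ioo (-π) π, F p := hfubini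
    _ ≤ (∫ r in Ioo 1 (1 + ε), r) *
          (√(2 * π) * √(∫ p in Ioo 1 2 ×ˢ Ioo (-π) π, p.1 * F p ^ 2)) := by
        gcongr
        · exact setIntegral_nonneg measurableSet_Ioo fun r hr => by linarith [hr.1]
        · exact setIntegral_polarBox_le_sqrt hF
    _ ≤ 2 * ε * (√(2 * π) * √(∫ p in Ioo 1 2 ×ˢ Ioo (-π) π, p.1 * F p ^ 2)) := by gcongr
    _ = _ := by ring

end PolarBox

/-- Thin-annulus estimate: if `u` is `C¹` on a neighborhood of the closed annulus
`{1 ≤ ‖x‖ ≤ 2}` in `ℝ²` and vanishes on the outer boundary `{‖x‖ = 2}`, then for every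
`0 < ε ≤ 1` the mass of `u` on the thin annular layer `{1 < ‖x‖ < 1 + ε}` is controlled by
`2√(2π)·ε` times the `L²` norm of the gradient of `u` on the annulus `{1 < ‖x‖ < 2}`. -/
theorem thin_annulus_estimate
    (u : EuclideanSpace ℝ (Fin 2) → ℝ)
    (U : Set (EuclideanSpace ℝ (Fin 2))) (hU : IsOpen U)
    (hsub : closure {x : EuclideanSpace ℝ (Fin 2) | 1 < ‖x‖ ∧ ‖x‖ < 2} ⊆ U)
    (hu : ContDiffOn ℝ 1 u U)
    (hbc : ∀ x : EuclideanSpace ℝ (Fin 2), ‖x‖ = 2 → u x = 0)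
    (ε : ℝ) (hε0 : 0 < ε) (hε1 : ε ≤ 1) :
    ∫ x in {x : EuclideanSpace ℝ (Fin 2) | 1 < ‖x‖ ∧ ‖x‖ < 1 + ε}, |u x| ≤
      2 * Real.sqrt (2 * π) * ε *
        Real.sqrt (∫ x in {x : EuclideanSpace ℝ (Fin 2) | 1 < ‖x‖ ∧ ‖x‖ < 2},
          ‖gradient u x‖ ^ 2) := by
  have hpolarU (p : ℝ × ℝ) (hp : p.1 ∈ Icc 1 2) : euclideanPolarCoordSymm p ∈ U := by
    refine hsub (mem_closure_annulus one_pos one_lt_two ?_)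
    rwa [norm_euclideanPolarCoordSymm, abs_of_pos (one_pos.trans_le hp.1)]
  simp_rw [norm_gradient_eq_norm_fderiv]
  change ∫ x in annulus _ 1 (1 + ε), |u x| ≤
    2 * √(2 * π) * ε * √(∫ x in annulus _ 1 2, ‖fderiv ℝ u x‖ ^ 2)
  rw [setIntegral_annulus_eq_setIntegral_polarCoord _ zero_le_one,
    setIntegral_annulus_eq_setIntegral_polarCoord _ zero_le_one]
  refine setIntegral_mul_abs_le_of_le_setIntegral_polarBox ?_ hε0 hε1 fun ⟨r, θ⟩ hp => ?_
  · exact ((hu.continuousOn_fderiv_of_isOpen hU le_rfl).comp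
      continuous_euclideanPolarCoordSymm.continuousOn fun p hp => hpolarU p hp.1).norm
  set ω := euclideanPolarCoordSymm (1, θ)
  have hω : ‖ω‖ = 1 := by simp [ω, norm_euclideanPolarCoordSymm]
  have hmk (t : ℝ) : euclideanPolarCoordSymm (t, θ) = t • ω := euclideanPolarCoordSymm_mk t θ
  have hray := abs_le_norm_mul_integral_norm_fderiv_smul hU hu (w := ω)
    (fun t ht => hmk t ▸ hpolarU (t, θ) ht)
    (hbc _ (by rw [norm_smul, hω]; norm_num)) ⟨hp.1.1.le, by linarith [hp.1.2]⟩
  simp only [hmk]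
  rwa [hω, one_mul, intervalIntegral.integral_of_le one_le_two,
    integral_Ioc_eq_integral_Ioo] at hray
end

section
/- Let H be a real inner product space, L : H → H a linear map, τ > 0, and z₀, ω₀, z ∈ H. Set ω = ω₀ + τ·z, and suppose that (1/τ)·⟨z − z₀, z⟩ + ‖Lz‖² + ⟨Lω, Lz⟩ = 0. Then ½‖z‖² + ½‖Lω‖² + τ‖Lz‖² + ½‖z − z₀‖² + ½‖L(ω − ω₀)‖² = ½‖z₀‖² + ½‖Lω₀‖². -/
/-! Testing with the new velocity turns each backward difference into a difference of energies
plus a numerical dissipation, by `2⟨x - y, x⟩ = ‖x‖² - ‖y‖² + ‖x - y‖²`. Applied to the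
velocities, and to `Lω, Lω₀` using `Lω - Lω₀ = τ Lz`, this turns `τ` times the tested equation
into the energy identity. -/

open scoped RealInnerProductSpace

theorem two_mul_inner_sub_self_eq {F : Type*} [NormedAddCommGroup F] [InnerProductSpace ℝ F]
    (x y : F) : 2 * ⟪x - y, x⟫ = ‖x‖ ^ 2 - ‖y‖ ^ 2 + ‖x - y‖ ^ 2 := by
  rw [norm_sub_sq_real, inner_sub_left, real_inner_self_eq_norm_sq, real_inner_comm]
  ring

/-- Abstract discrete energy identity for one step of the plate subproblem of the Lie
operator-splitting scheme: if the new velocity `z`, old velocity `z₀`, old displacement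
`ω₀`, updated displacement `ω = ω₀ + τ z`, and a linear map `L` satisfy the tested
time-discrete equation `(1/τ)⟨z - z₀, z⟩ + ‖Lz‖² + ⟨Lω, Lz⟩ = 0`, then the new energy plus
the dissipation `τ‖Lz‖²` plus the numerical dissipation equals the old energy. -/
theorem discrete_plate_energy_identity
    {H : Type*} [NormedAddCommGroup H] [InnerProductSpace ℝ H]
    (L : H →ₗ[ℝ] H) (τ : ℝ) (hτ : 0 < τ)
    (z₀ ω₀ z ω : H) (hω : ω = ω₀ + τ • z)
    (hweak : (1 / τ) * (inner ℝ (z - z₀) z : ℝ) + ‖L z‖ ^ 2 + (inner ℝ (L ω) (L z) : ℝ) = 0) :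
    (1 / 2) * ‖z‖ ^ 2 + (1 / 2) * ‖L ω‖ ^ 2 + τ * ‖L z‖ ^ 2
        + (1 / 2) * ‖z - z₀‖ ^ 2 + (1 / 2) * ‖L (ω - ω₀)‖ ^ 2
      = (1 / 2) * ‖z₀‖ ^ 2 + (1 / 2) * ‖L ω₀‖ ^ 2 := by
  have hincrement : L (ω - ω₀) = τ • L z := by
    rw [hω, add_sub_cancel_left, map_smul]
  have hvelocity := two_mul_inner_sub_self_eq z z₀
  have hdisplacement := two_mul_inner_sub_self_eq (L ω) (L ω₀)
  rw [← map_sub, hincrement, real_inner_smul_left, real_inner_comm] at hdisplacement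
  have hscaled : ⟪z - z₀, z⟫ + τ * ‖L z‖ ^ 2 + τ * ⟪L ω, L z⟫ = 0 := by
    field_simp at hweak
    linear_combination hweak
  rw [hincrement]
  linear_combination hscaled - hvelocity / 2 - hdisplacement / 2
end
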